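/- arXiv:1412.4389 — 3 statements merged into one kernel-verified Lean document; each statement's English description precedes it below -/
import Mathlib

section
/- Let G be a connected Lie group with universal covering group p : G̃ → G (so G̃ is a simply connected Lie group and p is a surjective continuous homomorphism which is a covering map, with kernel isomorphic to π₁(G)). Let Γ be an exponent-canceling group of rank r, with generators γ_1, …, γ_r given by the images of the free generators of the presentation. For 1 ≤ k ≤ r, let ι_k : G → Hom(Γ, G) be the continuous k-th factor inclusion sending g ∈ G to the homomorphism γ_k ↦ g, γ_i ↦ 1 for i ≠ k (well defined because each relator has total exponent zero in each generator); its image lies in the connected component Hom⁰(Γ, G) of the trivial homomorphism. If Hom(Γ, G̃) is simply connected, then the map π₁(G, 1)^r → π₁(Hom⁰(Γ, G), triv) sending (c_1, …, c_r) to the product (ι_1)_*(c_1) · (ι_2)_*(c_2) ⋯ (ι_r)_*(c_r) is a well-defined group isomorphism. In particular, the images of the maps (ι_k)_* generate π₁(Hom⁰(Γ, G)). -/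
/-!
Evaluation at the generators gives a homomorphism `π₁(Hom⁰(Γ, G)) → π₁(G)^r`, and since
`ev_j ∘ ι_k` is the identity for `j = k` and constant otherwise, the product
`(ι_1)_*(c_1) ⋯ (ι_r)_*(c_r)` is a section of it. It remains to see that it is injective. If a
loop `γ` in `Hom⁰(Γ, G)` has null-homotopic coordinate loops, lift each of them through the
covering `G̃ → G` starting at `1`; by homotopy lifting the lifts are loops. A relator evaluated
on the lifts is a continuous lift of the constant path `1` starting at `1`, hence constant, so the
lifts form a loop in `Hom(Γ, G̃)`. That space is simply connected, and `γ` is the image of this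
loop, hence null-homotopic.
-/

open scoped Manifold

/-- The representation space `Hom(Γ, G)`: group homomorphisms `Γ → G`, topologized by
pointwise convergence (as a subspace of `Γ → G`). -/
abbrev HomSpace (Γ G : Type*) [Group Γ] [Group G] [TopologicalSpace G] : Type _ :=
  {f : Γ → G // ∀ a b, f (a * b) = f a * f b}

abbrev trivialHom (Γ G : Type*) [Group Γ] [Group G] [TopologicalSpace G] : HomSpace Γ G :=
  ⟨fun _ => 1, by simp⟩

noncomputable def pi1Map {X Y : Type} [TopologicalSpace X] [TopologicalSpace Y]
    (f : C(X, Y)) (x : X) (y : Y) (h : f x = y) :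
    FundamentalGroup X x → FundamentalGroup Y y := by
  subst h
  exact fun c =>
    @FundamentalGroup.fromPath (TopCat.of Y) _ (f x)
      (Path.Homotopic.Quotient.map (@FundamentalGroup.toPath (TopCat.of X) _ x c) f)

open unitInterval

theorem List.prod_ofFn_mulSingle {M : Type*} [Monoid M] :
    ∀ {n : ℕ} (j : Fin n) (x : M), (List.ofFn (Pi.mulSingle j x)).prod = x
  | n + 1, j, x => by
    rw [List.ofFn_succ, List.prod_cons]
    induction j using Fin.cases with
    | zero => simp [Fin.succ_ne_zero]
    | succ i =>
      have hsucc : (fun k : Fin n => (Pi.mulSingle i.succ x : Fin (n + 1) → M) k.succ) =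
          (Pi.mulSingle i x : Fin n → M) := by
        ext k; simp [Pi.mulSingle_apply]
      rw [Pi.mulSingle_eq_of_ne (Fin.succ_ne_zero i).symm, one_mul, hsucc,
        List.prod_ofFn_mulSingle i x]

theorem continuous_freeGroupLift_apply {α A K : Type*} [TopologicalSpace A] [Group K]
    [TopologicalSpace K] [IsTopologicalGroup K] {g : A → α → K}
    (hg : ∀ k, Continuous fun a => g a k) (w : FreeGroup α) :
    Continuous fun a => FreeGroup.lift (g a) w := by
  induction w using FreeGroup.induction_on with
  | C1 => simpa only [map_one] using continuous_const
  | of k => simpa only [FreeGroup.lift_apply_of] using hg k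
  | inv_of k hk => simp only [map_inv]; exact hk.inv
  | mul v w hv hw => simp only [map_mul]; exact hv.mul hw

theorem IsCoveringMap.liftPath_apply_one_eq_of_homotopic_refl {E X : Type*} [TopologicalSpace E]
    [TopologicalSpace X] {f : E → X} (hf : IsCoveringMap f) {x : X} {δ : Path x x}
    (hδ : δ.Homotopic (Path.refl x)) {e : E} (he : δ 0 = f e) : hf.liftPath δ e he 1 = e :=
  (hf.liftPath_apply_one_eq_of_homotopicRel hδ e he (δ.source.symm.trans he)).trans
    (DFunLike.congr_fun (hf.liftPath_const (δ.source.symm.trans he)) 1)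

theorem Path.homotopic_refl_of_eq_map {X Y : Type*} [TopologicalSpace X] [TopologicalSpace Y]
    [SimplyConnectedSpace X] {x : X} {y : Y} (f : C(X, Y)) (hf : f x = y) (Ψ : Path x x)
    (γ : Path y y) (h : ∀ t, f (Ψ t) = γ t) : γ.Homotopic (Path.refl y) := by
  subst hf
  have hΨ := ContinuousMap.HomotopicRel.comp_continuousMap
    (SimplyConnectedSpace.paths_homotopic Ψ (Path.refl x)) f
  have hγ : f.comp Ψ.toContinuousMap = γ.toContinuousMap := ContinuousMap.ext h
  rwa [hγ] at hΨ

theorem pi1Map_eq_mapOfEq {X Y : Type} [TopologicalSpace X] [TopologicalSpace Y] (f : C(X, Y))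
    (x : X) (y : Y) (h : f x = y) : pi1Map f x y h = FundamentalGroup.mapOfEq f h := by
  subst h
  funext a
  rw [FundamentalGroup.mapOfEq_apply, Path.Homotopic.Quotient.cast_rfl_rfl]
  rfl

namespace FundamentalGroup

variable {X Y Z : Type*} [TopologicalSpace X] [TopologicalSpace Y] [TopologicalSpace Z]

theorem mapOfEq_comp {f : C(X, Y)} {g : C(Y, Z)} {x : X} {y : Y} {z : Z} (hf : f x = y)
    (hg : g y = z) :
    mapOfEq (g.comp f) (show g (f x) = z by rw [hf, hg]) = (mapOfEq g hg).comp (mapOfEq f hf) := by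
  subst hf hg
  ext a
  simp only [MonoidHom.comp_apply, mapOfEq_apply, Path.Homotopic.Quotient.cast_rfl_rfl]
  exact Path.Homotopic.Quotient.map_comp

theorem mapOfEq_of_eq_id {f : C(X, X)} (hf : f = ContinuousMap.id X) {x : X} (h : f x = x) :
    mapOfEq f h = MonoidHom.id _ := by
  subst hf
  ext a
  rw [mapOfEq_apply]
  induction a using Path.Homotopic.Quotient.ind with
  | mk γ => rfl

theorem mapOfEq_of_eq_const {f : C(X, Y)} {y : Y} (hf : f = ContinuousMap.const X y) {x : X}
    (h : f x = y) : mapOfEq f h = 1 := by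
  subst hf
  ext a
  rw [mapOfEq_apply]
  induction a using Path.Homotopic.Quotient.ind with
  | mk γ => rfl

theorem mapOfEq_list_prod_ofFn_of_retraction {r : ℕ} {x : X} {y : Y} (ι : Fin r → C(Y, X))
    (e : Fin r → C(X, Y)) (hι : ∀ k, ι k y = x) (he : ∀ j, e j x = y)
    (heι : ∀ j k z, e j (ι k z) = if j = k then z else y) (c : Fin r → FundamentalGroup Y y)
    (j : Fin r) :
    mapOfEq (e j) (he j) (List.ofFn fun k => mapOfEq (ι k) (hι k) (c k)).prod = c j := by
  have hcomp : ∀ k, mapOfEq (e j) (he j) (mapOfEq (ι k) (hι k) (c k)) =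
      (Pi.mulSingle j (c j) : Fin r → FundamentalGroup Y y) k := by
    intro k
    rw [← MonoidHom.comp_apply, ← mapOfEq_comp]
    by_cases hjk : j = k
    · subst hjk
      have hid : (e j).comp (ι j) = ContinuousMap.id Y :=
        ContinuousMap.ext fun z => (heι j j z).trans (if_pos rfl)
      rw [Pi.mulSingle_eq_same, mapOfEq_of_eq_id hid]
      rfl
    · have hconst : (e j).comp (ι k) = ContinuousMap.const Y y :=
        ContinuousMap.ext fun z => (heι j k z).trans (if_neg hjk)
      rw [Pi.mulSingle_eq_of_ne' hjk, mapOfEq_of_eq_const hconst]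
      rfl
  rw [map_list_prod, List.map_ofFn, Function.comp_def]
  simp only [hcomp]
  exact List.prod_ofFn_mulSingle j (c j)

end FundamentalGroup

namespace HomSpace

variable {Γ K L : Type*} [Group Γ] [Group K] [TopologicalSpace K] [Group L] [TopologicalSpace L]

def toMonoidHom (φ : HomSpace Γ K) : Γ →* K :=
  MonoidHom.mk' φ.1 φ.2

def ofMonoidHom (f : Γ →* K) : HomSpace Γ K :=
  ⟨f, map_mul f⟩

def eval (x : Γ) : C(HomSpace Γ K, K) :=
  ⟨fun φ => φ.1 x, (continuous_apply x).comp continuous_subtype_val⟩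

def evalComponent (x : Γ) : C(connectedComponent (trivialHom Γ K), K) :=
  (eval x).restrict _

theorem evalComponent_trivialHom (x : Γ) :
    evalComponent x ⟨trivialHom Γ K, mem_connectedComponent⟩ = 1 :=
  rfl

def postcomp (p : K →* L) (hp : Continuous p) : C(HomSpace Γ K, HomSpace Γ L) :=
  ⟨fun φ => ofMonoidHom (p.comp φ.toMonoidHom),
    continuous_pi (fun x => hp.comp (eval x).continuous) |>.subtype_mk _⟩

theorem postcomp_mem_connectedComponent [ConnectedSpace (HomSpace Γ K)] (p : K →* L)
    (hp : Continuous p) (φ : HomSpace Γ K) :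
    postcomp p hp φ ∈ connectedComponent (trivialHom Γ L) := by
  have htriv : postcomp p hp (trivialHom Γ K) = trivialHom Γ L :=
    Subtype.ext (funext fun _ => map_one p)
  exact (isPreconnected_range (postcomp p hp).continuous).subset_connectedComponent
    ⟨_, htriv⟩ ⟨φ, rfl⟩

def postcompComponent [ConnectedSpace (HomSpace Γ K)] (p : K →* L) (hp : Continuous p) :
    C(HomSpace Γ K, connectedComponent (trivialHom Γ L)) :=
  ⟨fun φ => ⟨postcomp p hp φ, postcomp_mem_connectedComponent p hp φ⟩,
    (postcomp p hp).continuous.subtype_mk _⟩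

theorem ext_presentedGroup {α : Type*} {R : Set (FreeGroup α)}
    {φ ψ : HomSpace (PresentedGroup R) K}
    (h : ∀ k, φ.1 (PresentedGroup.of k) = ψ.1 (PresentedGroup.of k)) : φ = ψ :=
  Subtype.ext (funext (DFunLike.congr_fun (PresentedGroup.ext (φ := φ.toMonoidHom)
    (ψ := ψ.toMonoidHom) h)))

end HomSpace

section Lifting

variable {α K L : Type*} {R : Set (FreeGroup α)} [Group K] [TopologicalSpace K]
  [IsTopologicalGroup K] [Group L] [TopologicalSpace L] {p : K →* L}

theorem IsCoveringMap.exists_homSpace_lift (hp : IsCoveringMap p) {A : Type*}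
    [TopologicalSpace A] [PreconnectedSpace A] (φ : A → HomSpace (PresentedGroup R) L)
    (g : α → C(A, K)) (hg : ∀ k a, p (g k a) = (φ a).1 (PresentedGroup.of k)) (a₀ : A)
    (hg₀ : ∀ k, g k a₀ = 1) :
    ∃ ψ : C(A, HomSpace (PresentedGroup R) K),
      ∀ a k, (ψ a).1 (PresentedGroup.of k) = g k a := by
  have hcont : ∀ w, Continuous fun a => FreeGroup.lift (fun k => g k a) w :=
    continuous_freeGroupLift_apply fun k => (g k).continuous
  have hproj : ∀ a w, p (FreeGroup.lift (fun k => g k a) w) =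
      (φ a).toMonoidHom (PresentedGroup.mk R w) := fun a w =>
    (FreeGroup.lift_unique (p.comp (FreeGroup.lift _))
      fun k => (congrArg p FreeGroup.lift_apply_of).trans (hg k a)).trans
      (FreeGroup.lift_unique ((φ a).toMonoidHom.comp (PresentedGroup.mk R)) fun _ => rfl).symm
  have hrel : ∀ a, ∀ w ∈ R, FreeGroup.lift (fun k => g k a) w = 1 := by
    intro a w hw
    have hw1 : ∀ a, p (FreeGroup.lift (fun k => g k a) w) = 1 := fun a => by
      rw [hproj, PresentedGroup.one_of_mem hw, map_one]
    calc FreeGroup.lift (fun k => g k a) w = FreeGroup.lift (fun k => g k a₀) w :=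
          hp.const_of_comp (hcont w) (fun a a' => by rw [hw1, hw1]) a a₀
      _ = 1 := by simp only [hg₀]; exact (FreeGroup.lift_unique 1 fun _ => rfl).symm
  refine ⟨⟨fun a => HomSpace.ofMonoidHom (PresentedGroup.toGroup (hrel a)), ?_⟩,
    fun a k => PresentedGroup.toGroup.of _⟩
  refine (continuous_pi fun x => ?_).subtype_mk _
  induction x using PresentedGroup.induction_on with
  | H w => exact hcont w

theorem IsCoveringMap.injective_pi_mapOfEq_evalComponent (hp : IsCoveringMap p)
    [SimplyConnectedSpace (HomSpace (PresentedGroup R) K)] :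
    Function.Injective (MonoidHom.pi fun k : α => FundamentalGroup.mapOfEq
      (HomSpace.evalComponent (K := L) (PresentedGroup.of (rels := R) k))
      (HomSpace.evalComponent_trivialHom _)) := by
  rw [injective_iff_map_eq_one]
  intro a ha
  induction a using Path.Homotopic.Quotient.ind with | mk γ => ?_
  let δ : α → Path (1 : L) 1 := fun k =>
    γ.map (HomSpace.evalComponent (PresentedGroup.of k)).continuous
  have hnull : ∀ k, (δ k).Homotopic (Path.refl 1) := by
    intro k
    have h := congr_fun ha k
    rw [MonoidHom.pi_apply, FundamentalGroup.mapOfEq_apply] at h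
    exact Path.Homotopic.Quotient.eq.mp h
  have hδ0 : ∀ k, δ k 0 = p 1 := fun k => by rw [map_one]; exact (δ k).source
  let g : α → C(I, K) := fun k => hp.liftPath (δ k) 1 (hδ0 k)
  obtain ⟨ψ, hψ⟩ := hp.exists_homSpace_lift (fun t => (γ t).1) g
    (fun k t => congr_fun (hp.liftPath_lifts ..) t) 0 (fun k => hp.liftPath_zero ..)
  have hψ0 : ψ 0 = trivialHom _ _ :=
    HomSpace.ext_presentedGroup fun k => (hψ 0 k).trans (hp.liftPath_zero ..)
  have hψ1 : ψ 1 = trivialHom _ _ := HomSpace.ext_presentedGroup fun k =>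
    (hψ 1 k).trans (hp.liftPath_apply_one_eq_of_homotopic_refl (hnull k) (hδ0 k))
  refine Path.Homotopic.Quotient.eq.mpr <| Path.homotopic_refl_of_eq_map
    (HomSpace.postcompComponent p hp.continuous) ?_ ⟨ψ, hψ0, hψ1⟩ γ fun t => ?_
  · exact Subtype.ext (Subtype.ext (funext fun _ => map_one p))
  · refine Subtype.ext (HomSpace.ext_presentedGroup fun k => ?_)
    exact (congrArg p (hψ t k)).trans (congr_fun (hp.liftPath_lifts ..) t)

end Lifting

theorem stmt11_general
    (G : Type) [TopologicalSpace G] [Group G]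
    (Gt : Type) [Group Gt] [TopologicalSpace Gt] [IsTopologicalGroup Gt]
    (p : Gt →* G) (hp_cov : IsCoveringMap p)
    (r : ℕ) (R : Set (FreeGroup (Fin r)))
    (hsc : SimplyConnectedSpace (HomSpace (PresentedGroup R) Gt)) :
    ∀ ι : Fin r → C(G, ↥(connectedComponent (trivialHom (PresentedGroup R) G))),
      (∀ (k : Fin r) (g : G) (j : Fin r),
        (ι k g).1.1 (PresentedGroup.of j) = if j = k then g else 1) →
      ∀ hι1 : ∀ k, ι k 1 = ⟨trivialHom (PresentedGroup R) G, mem_connectedComponent⟩,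
      (∃ Φ : (Fin r → FundamentalGroup G 1) ≃*
          FundamentalGroup (↥(connectedComponent (trivialHom (PresentedGroup R) G)))
            ⟨trivialHom (PresentedGroup R) G, mem_connectedComponent⟩,
        ∀ c, Φ c = (List.ofFn fun k =>
          pi1Map (ι k) 1 ⟨trivialHom (PresentedGroup R) G, mem_connectedComponent⟩
            (hι1 k) (c k)).prod) ∧
      Subgroup.closure (⋃ k, Set.range
          (pi1Map (ι k) 1 ⟨trivialHom (PresentedGroup R) G, mem_connectedComponent⟩
            (hι1 k))) = ⊤ := by
  intro ι hι hι1
  have := hsc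
  simp only [pi1Map_eq_mapOfEq]
  set Φ := MonoidHom.pi fun k : Fin r => FundamentalGroup.mapOfEq
    (HomSpace.evalComponent (K := G) (PresentedGroup.of (rels := R) k))
    (HomSpace.evalComponent_trivialHom _)
  have hsection : ∀ c, Φ (List.ofFn fun k => FundamentalGroup.mapOfEq (ι k) (hι1 k) (c k)).prod
      = c := fun c => funext fun j =>
    FundamentalGroup.mapOfEq_list_prod_ofFn_of_retraction ι
      (fun j => HomSpace.evalComponent (PresentedGroup.of j)) hι1
      (fun _ => HomSpace.evalComponent_trivialHom _) (fun j k g => hι k g j) c j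
  let e := MulEquiv.ofBijective Φ
    ⟨hp_cov.injective_pi_mapOfEq_evalComponent, fun c => ⟨_, hsection c⟩⟩
  have he : ∀ c, e.symm c =
      (List.ofFn fun k => FundamentalGroup.mapOfEq (ι k) (hι1 k) (c k)).prod :=
    fun c => e.symm_apply_eq.mpr (hsection c).symm
  refine ⟨⟨e.symm, he⟩, (Subgroup.eq_top_iff' _).mpr fun a => ?_⟩
  rw [← e.symm_apply_apply a, he]
  refine Subgroup.list_prod_mem _ fun x hx => ?_
  obtain ⟨k, rfl⟩ := List.mem_ofFn.mp hx
  exact Subgroup.subset_closure (Set.mem_iUnion.mpr ⟨k, _, rfl⟩)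

/-- Let `G` be a connected Lie group with universal covering group
`p : G̃ → G`, and let `Γ` be an exponent-canceling group of rank `r` (presented with all
relators in the commutator subgroup of `F_r`), with generators `γ_j` the images of the free
generators.  Let `ι_k : G → Hom⁰(Γ, G)` be the `k`-th factor inclusion, sending `g` to the
homomorphism with `γ_k ↦ g` and `γ_j ↦ 1` for `j ≠ k`.  If `Hom(Γ, G̃)` is simply
connected, then `(c_1, …, c_r) ↦ (ι_1)_*(c_1) ⋯ (ι_r)_*(c_r)` is a well-defined group
isomorphism `π₁(G, 1)^r ≅ π₁(Hom⁰(Γ, G), triv)`; in particular the images of the maps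
`(ι_k)_*` generate `π₁(Hom⁰(Γ, G), triv)`. -/
theorem stmt11 {n : ℕ} (G : Type) [TopologicalSpace G]
    [ChartedSpace (EuclideanSpace ℝ (Fin n)) G] [Group G] [IsTopologicalGroup G]
    [LieGroup (𝓡 n) (⊤ : ℕ∞) G] [ConnectedSpace G]
    (Gt : Type) [Group Gt] [TopologicalSpace Gt] [IsTopologicalGroup Gt]
    [SimplyConnectedSpace Gt]
    (p : Gt →* G) (hp_cont : Continuous p) (hp_surj : Function.Surjective p)
    (hp_cov : IsCoveringMap p)
    (r : ℕ) (R : Set (FreeGroup (Fin r)))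
    (hR : ∀ w ∈ R, w ∈ commutator (FreeGroup (Fin r)))
    (hsc : SimplyConnectedSpace (HomSpace (PresentedGroup R) Gt)) :
    ∀ ι : Fin r → C(G, ↥(connectedComponent (trivialHom (PresentedGroup R) G))),
      (∀ (k : Fin r) (g : G) (j : Fin r),
        (ι k g).1.1 (PresentedGroup.of j) = if j = k then g else 1) →
      ∀ hι1 : ∀ k, ι k 1 = ⟨trivialHom (PresentedGroup R) G, mem_connectedComponent⟩,
      (∃ Φ : (Fin r → FundamentalGroup G 1) ≃*
          FundamentalGroup (↥(connectedComponent (trivialHom (PresentedGroup R) G)))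
            ⟨trivialHom (PresentedGroup R) G, mem_connectedComponent⟩,
        ∀ c, Φ c = (List.ofFn fun k =>
          pi1Map (ι k) 1 ⟨trivialHom (PresentedGroup R) G, mem_connectedComponent⟩
            (hι1 k) (c k)).prod) ∧
      Subgroup.closure (⋃ k, Set.range
          (pi1Map (ι k) 1 ⟨trivialHom (PresentedGroup R) G, mem_connectedComponent⟩
            (hι1 k))) = ⊤ :=
  stmt11_general G Gt p hp_cov r R hsc
end

section
/- Let f : X → Y and g : Y → Z be continuous maps between topological spaces, and assume f is surjective. If both f and the composite g ∘ f are Serre fibrations, then g is a Serre fibration. -/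
/-
Lifting a homotopy `H` through `g` is done in two stages. Since `f` is a surjective Serre
fibration, every map from a cube to `Y` lifts to `X` (by induction on the dimension: lift the
bottom face, then the homotopy over it); in particular the initial map `H₀` lifts to some
`K₀`. The homotopy lifting property of `g ∘ f` then lifts `H` to a homotopy `L` starting at
`K₀`, and `f ∘ L` is the required lift of `H` through `g`.
-/

/-- A map `f : E → B` is a Serre fibration if for every `n ≥ 1` it has the homotopy lifting
property for the inclusion `[0,1]^{n-1} × {0} ↪ [0,1]^{n-1} × [0,1] = [0,1]^n`:
given continuous `H₀ : [0,1]^{n-1} → E` and `H : [0,1]^n → B` with `f (H₀ s) = H (s, 0)`,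
there is a continuous lift `L : [0,1]^n → E` with `L (s, 0) = H₀ s` and `f ∘ L = H`. -/
def IsSerreFibration {E B : Type*} [TopologicalSpace E] [TopologicalSpace B]
    (f : E → B) : Prop :=
  ∀ (m : ℕ) (H₀ : C((Fin m → unitInterval), E))
    (H : C((Fin m → unitInterval) × unitInterval, B)),
    (∀ s, f (H₀ s) = H (s, 0)) →
    ∃ L : C((Fin m → unitInterval) × unitInterval, E),
      (∀ s, L (s, 0) = H₀ s) ∧ ∀ p, f (L p) = H p

open unitInterval

def cubeSuccHomeomorph (m : ℕ) : ((Fin m → I) × I) ≃ₜ (Fin (m + 1) → I) :=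
  ((Homeomorph.refl _).prodCongr (Homeomorph.funUnique (Fin 1) I).symm).trans
    (Fin.appendHomeomorph m 1)

theorem IsSerreFibration.exists_lift_of_surjective {X Y : Type*} [TopologicalSpace X]
    [TopologicalSpace Y] {f : X → Y} (hf : IsSerreFibration f) (hsurj : Function.Surjective f)
    (m : ℕ) (h : C(Fin m → I, Y)) : ∃ k : C(Fin m → I, X), ∀ s, f (k s) = h s := by
  induction m with
  | zero =>
    obtain ⟨x, hx⟩ := hsurj (h default)
    exact ⟨.const _ x, fun s => by rw [Subsingleton.elim s default, ContinuousMap.const_apply, hx]⟩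
  | succ m ih =>
    let e := cubeSuccHomeomorph m
    let H : C((Fin m → I) × I, Y) := h.comp e
    obtain ⟨k₀, hk₀⟩ := ih (H.comp ((ContinuousMap.id _).prodMk (.const _ 0)))
    obtain ⟨L, -, hL⟩ := hf m k₀ H hk₀
    refine ⟨L.comp e.symm, fun s => ?_⟩
    simpa [H] using hL (e.symm s)

theorem stmt12_general {X Y Z : Type} [TopologicalSpace X] [TopologicalSpace Y] [TopologicalSpace Z]
    (f : X → Y) (g : Y → Z) (hf_cont : Continuous f)
    (hsurj : Function.Surjective f) (hf : IsSerreFibration f)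
    (hgf : IsSerreFibration (g ∘ f)) : IsSerreFibration g := by
  intro m H₀ H hH₀
  obtain ⟨K₀, hK₀⟩ := hf.exists_lift_of_surjective hsurj m H₀
  obtain ⟨L, hL₀, hL⟩ := hgf m K₀ H fun s => by simp only [Function.comp_apply, hK₀, hH₀]
  refine ⟨(⟨f, hf_cont⟩ : C(X, Y)).comp L, fun s => ?_, hL⟩
  simp only [ContinuousMap.comp_apply, ContinuousMap.coe_mk, hL₀, hK₀]

/-- If `f : X → Y` is a surjective Serre fibration and `g ∘ f` is a Serre
fibration, then `g : Y → Z` is a Serre fibration. -/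
theorem stmt12 {X Y Z : Type} [TopologicalSpace X] [TopologicalSpace Y] [TopologicalSpace Z]
    (f : X → Y) (g : Y → Z) (hf_cont : Continuous f) (hg_cont : Continuous g)
    (hsurj : Function.Surjective f) (hf : IsSerreFibration f)
    (hgf : IsSerreFibration (g ∘ f)) : IsSerreFibration g :=
  stmt12_general f g hf_cont hsurj hf hgf
end

section
/- Let F be a finite group acting continuously and freely on Hausdorff topological spaces E and B (freely means g·x = x implies g = 1), and let f : E → B be an F-equivariant continuous map which is a Serre fibration. Then the induced continuous map E/F → B/F between the orbit spaces (with their quotient topologies) is a Serre fibration. -/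
set_option linter.unusedSectionVars false
set_option maxHeartbeats 1000000

theorem ball_preconn13 {m : ℕ} (x : Fin m → unitInterval) {r : ℝ} (hr : 0 < r) :
    IsPreconnected (Metric.ball x r) := by
  rw [ball_pi x hr]
  apply isPreconnected_univ_pi
  intro i
  have h1 : Metric.ball (x i) r = Subtype.val ⁻¹' (Metric.ball ((x i : ℝ)) r) := by
    ext y; simp [Metric.mem_ball, Subtype.dist_eq]
  rw [← Topology.IsInducing.subtypeVal.isPreconnected_image, h1, Subtype.image_preimage_coe]
  rw [Real.ball_eq_Ioo]
  exact isPreconnected_iff_ordConnected.mpr (Set.ordConnected_Icc.inter Set.ordConnected_Ioo)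

section Aux2
variable {F Z : Type} [Group F] [Finite F] [TopologicalSpace Z] [T2Space Z] [MulAction F Z]


section Aux13

variable {F Z : Type} [Group F] [Finite F] [TopologicalSpace Z] [T2Space Z] [MulAction F Z]

theorem qeq13 {x y : Z} :
    Quotient.mk (MulAction.orbitRel F Z) x = Quotient.mk _ y ↔ ∃ g : F, g • y = x := by
  constructor
  · exact fun h => Quotient.eq''.mp h
  · rintro ⟨g, hg⟩
    exact Quotient.sound ⟨g, hg⟩

theorem free_cancel13 (hfree : ∀ (g : F) (x : Z), g • x = x → g = 1)
    {g h : F} {x : Z} (hx : g • x = h • x) : g = h := by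
  have h1 : (h⁻¹ * g) • x = x := by
    rw [mul_smul, hx, ← mul_smul, inv_mul_cancel, one_smul]
  have h2 := hfree _ _ h1
  have := inv_mul_eq_one.mp h2
  exact this.symm

theorem qopen13 (hc : ∀ g : F, Continuous fun x : Z => g • x) :
    IsOpenMap (Quotient.mk (MulAction.orbitRel F Z)) := by
  haveI : ContinuousConstSMul F Z := ⟨hc⟩
  exact isOpenMap_quotient_mk'_mul

theorem uniq_orbit13 (hc : ∀ g : F, Continuous fun x : Z => g • x)
    (hfree : ∀ (g : F) (x : Z), g • x = x → g = 1)
    {A : Type} [TopologicalSpace A] [PreconnectedSpace A]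
    {a b : A → Z} (ha : Continuous a) (hb : Continuous b)
    (horb : ∀ s, ∃ g : F, a s = g • b s) (s₀ : A) :
    ∃ g₀ : F, ∀ s, a s = g₀ • b s := by
  classical
  set C : F → Set A := fun g => {s | a s = g • b s} with hC
  have hclosed : ∀ g, IsClosed (C g) := fun g => isClosed_eq ha ((hc g).comp hb)
  have hdisj : ∀ g h : F, ∀ s, s ∈ C g → s ∈ C h → g = h := by
    intro g h s hg hh
    exact free_cancel13 hfree (hg.symm.trans hh)
  have hopen : ∀ g, IsOpen (C g) := by
    intro g
    rw [← isClosed_compl_iff]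
    have hcompl : (C g)ᶜ = ⋃ h ∈ {h : F | h ≠ g}, C h := by
      ext s
      simp only [Set.mem_compl_iff, Set.mem_iUnion, Set.mem_setOf_eq, exists_prop]
      constructor
      · intro hs
        obtain ⟨h, hh⟩ := horb s
        exact ⟨h, fun e => hs (by rw [e] at hh; exact hh), hh⟩
      · rintro ⟨h, hne, hh⟩ hgs
        exact hne (hdisj h g s hh hgs)
    rw [hcompl]
    exact (Set.toFinite _).isClosed_biUnion fun h _ => hclosed h
  obtain ⟨g₀, hg₀⟩ := horb s₀
  have huniv : C g₀ = Set.univ :=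
    IsClopen.eq_univ ⟨hclosed g₀, hopen g₀⟩ ⟨s₀, hg₀⟩
  exact ⟨g₀, fun s => by have : s ∈ C g₀ := huniv ▸ Set.mem_univ s; exact this⟩

theorem exists_local_section13 (hc : ∀ g : F, Continuous fun x : Z => g • x)
    (hfree : ∀ (g : F) (x : Z), g • x = x → g = 1) (z : Z) :
    ∃ V : Set (Quotient (MulAction.orbitRel F Z)), IsOpen V ∧
      Quotient.mk (MulAction.orbitRel F Z) z ∈ V ∧
      ∃ sec : Quotient (MulAction.orbitRel F Z) → Z,
        ContinuousOn sec V ∧ ∀ q ∈ V, Quotient.mk (MulAction.orbitRel F Z) (sec q) = q := by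
  classical
  have hsep : ∀ g : F, g ≠ 1 → ∃ AB : Set Z × Set Z, IsOpen AB.1 ∧ IsOpen AB.2 ∧
      z ∈ AB.1 ∧ g • z ∈ AB.2 ∧ Disjoint AB.1 AB.2 := by
    intro g hg
    have hne : g • z ≠ z := fun h => hg (hfree g z h)
    obtain ⟨Bs, As, hBo, hAo, hgzB, hzA, hd⟩ := t2_separation hne
    exact ⟨(As, Bs), hAo, hBo, hzA, hgzB, hd.symm⟩
  set S : F → Set Z := fun g =>
    if h : g = 1 then Set.univ
    else ((hsep g h).choose.1 ∩ (fun x => g • x) ⁻¹' (hsep g h).choose.2) with hS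
  have hSo : ∀ g, IsOpen (S g) := by
    intro g
    by_cases h : g = 1
    · simp only [hS, dif_pos h]; exact isOpen_univ
    · simp only [hS, dif_neg h]
      exact ((hsep g h).choose_spec.1).inter
        (((hsep g h).choose_spec.2.1).preimage (hc g))
  have hzS : ∀ g, z ∈ S g := by
    intro g
    by_cases h : g = 1
    · simp only [hS, dif_pos h]; trivial
    · simp only [hS, dif_neg h]
      exact ⟨(hsep g h).choose_spec.2.2.1, (hsep g h).choose_spec.2.2.2.1⟩
  set U := ⋂ g : F, S g with hU
  have hUo : IsOpen U := isOpen_iInter_of_finite hSo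
  have hzU : z ∈ U := Set.mem_iInter.mpr hzS
  have hUdisj : ∀ g : F, g ≠ 1 → ∀ x ∈ U, g • x ∉ U := by
    intro g hg x hx hgx
    have h1 : x ∈ S g := Set.mem_iInter.mp hx g
    have h2 : g • x ∈ S g := Set.mem_iInter.mp hgx g
    simp only [hS, dif_neg hg] at h1 h2
    exact Set.disjoint_left.mp (hsep g hg).choose_spec.2.2.2.2 h2.1 h1.2
  have hinj : ∀ x ∈ U, ∀ y ∈ U,
      Quotient.mk (MulAction.orbitRel F Z) x = Quotient.mk _ y → x = y := by
    intro x hx y hy hxy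
    obtain ⟨g, hg⟩ := qeq13.mp hxy
    by_cases h1 : g = 1
    · rw [h1, one_smul] at hg; exact hg.symm
    · exact absurd (hg ▸ hx) (hUdisj g h1 y hy)
  refine ⟨Quotient.mk _ '' U, qopen13 hc U hUo, ⟨z, hzU, rfl⟩, ?_⟩
  set sec : Quotient (MulAction.orbitRel F Z) → Z := fun q =>
    if h : q ∈ Quotient.mk (MulAction.orbitRel F Z) '' U then h.choose else z with hsec
  have hsec_mem : ∀ q (h : q ∈ Quotient.mk (MulAction.orbitRel F Z) '' U),
      sec q ∈ U ∧ Quotient.mk (MulAction.orbitRel F Z) (sec q) = q := by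
    intro q h
    simp only [hsec, dif_pos h]
    exact ⟨h.choose_spec.1, h.choose_spec.2⟩
  refine ⟨sec, ?_, fun q hq => (hsec_mem q hq).2⟩
  rw [continuousOn_iff]
  intro q hq t hto hst
  refine ⟨Quotient.mk _ '' (t ∩ U), qopen13 hc _ (hto.inter hUo),
    ⟨sec q, ⟨hst, (hsec_mem q hq).1⟩, (hsec_mem q hq).2⟩, ?_⟩
  rintro q' ⟨⟨w, ⟨hwt, hwU⟩, hw⟩, hq'⟩
  have h2 := hsec_mem q' hq'
  have hsw : sec q' = w := hinj _ h2.1 _ hwU (by rw [h2.2, ← hw])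
  exact Set.mem_preimage.mpr (hsw ▸ hwt)


theorem quot_serre13 (hc : ∀ g : F, Continuous fun x : Z => g • x)
    (hfree : ∀ (g : F) (x : Z), g • x = x → g = 1) :
    IsSerreFibration (Quotient.mk (MulAction.orbitRel F Z)) := by
  classical
  intro m H₀ H hcomp
  -- Step A+B: local lifts around every parameter point
  have hlocal : ∀ s₀ : Fin m → unitInterval, ∃ U : Set (Fin m → unitInterval),
      IsOpen U ∧ s₀ ∈ U ∧ ∃ Λ : (Fin m → unitInterval) × unitInterval → Z,
        ContinuousOn Λ (U ×ˢ (Set.univ : Set unitInterval)) ∧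
        (∀ s ∈ U, Λ (s, 0) = H₀ s) ∧
        (∀ s ∈ U, ∀ t, Quotient.mk (MulAction.orbitRel F Z) (Λ (s, t)) = H (s, t)) := by
    intro s₀
    -- local data along {s₀} × I
    have hdata : ∀ t : unitInterval,
        ∃ V : Set (Quotient (MulAction.orbitRel F Z)),
        ∃ sec : Quotient (MulAction.orbitRel F Z) → Z,
        ∃ u : Set (Fin m → unitInterval), ∃ v : Set unitInterval,
        IsOpen V ∧ ContinuousOn sec V ∧
        (∀ q ∈ V, Quotient.mk (MulAction.orbitRel F Z) (sec q) = q) ∧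
        IsOpen u ∧ IsOpen v ∧ s₀ ∈ u ∧ t ∈ v ∧
        ∀ s ∈ u, ∀ t' ∈ v, H (s, t') ∈ V := by
      intro t
      obtain ⟨z, hz⟩ := Quotient.mk_surjective (H (s₀, t))
      obtain ⟨V, hVo, hzV, sec, hsecc, hsecp⟩ := exists_local_section13 hc hfree z
      have hHV : H (s₀, t) ∈ V := hz ▸ hzV
      have hopen := hVo.preimage H.continuous
      obtain ⟨u, v, huo, hvo, hsu, htv, huv⟩ := isOpen_prod_iff.mp hopen s₀ t hHV
      exact ⟨V, sec, u, v, hVo, hsecc, hsecp, huo, hvo, hsu, htv,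
        fun s hs t' ht' => huv (Set.mk_mem_prod hs ht')⟩
    choose V sec u v hVo hsecc hsecp huo hvo hsu htv hsub using hdata
    obtain ⟨T, hT⟩ := isCompact_univ.elim_finite_subcover v hvo
      (fun t _ => Set.mem_iUnion.mpr ⟨t, htv t⟩)
    have hTcov : (Set.univ : Set unitInterval) ⊆ ⋃ t : T, v t := by
      intro x hx
      obtain ⟨t, ht, hmem⟩ := Set.mem_iUnion₂.mp (hT hx)
      exact Set.mem_iUnion.mpr ⟨⟨t, ht⟩, hmem⟩
    obtain ⟨δ, hδ, hball⟩ := lebesgue_number_lemma_of_metric isCompact_univ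
      (fun t : T => hvo t) hTcov
    obtain ⟨n₀, hn₀⟩ := exists_nat_one_div_lt hδ
    obtain ⟨n, hnpos', hinv⟩ : ∃ n : ℕ, 0 < n ∧ (1:ℝ)/n < δ :=
      ⟨n₀ + 1, Nat.succ_pos _, by exact_mod_cast hn₀⟩
    have hnpos : (0:ℝ) < n := by exact_mod_cast hnpos'
    set W := ⋂ t ∈ T, u t with hW
    have hWo : IsOpen W := isOpen_biInter_finset fun t _ => huo t
    have hsW : s₀ ∈ W := Set.mem_iInter₂.mpr fun t _ => hsu t
    obtain ⟨r, hr, hrW⟩ := Metric.isOpen_iff.mp hWo s₀ hsW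
    set U := Metric.ball s₀ r with hUdef
    have hUW : U ⊆ W := hrW
    have hUconn : IsPreconnected U := ball_preconn13 s₀ hr
    have hs₀U : s₀ ∈ U := Metric.mem_ball_self hr
    -- partition selection
    have hpart : ∀ i : ℕ, i < n → ∃ t, t ∈ T ∧
        ∀ t' : unitInterval, (i:ℝ)/n ≤ (t':ℝ) → (t':ℝ) ≤ ((i:ℝ)+1)/n → t' ∈ v t := by
      intro i hi
      have hx : ((i:ℝ)/n) ∈ Set.Icc (0:ℝ) 1 :=
        ⟨by positivity, by
          rw [div_le_one hnpos]; exact_mod_cast hi.le⟩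
      set x : unitInterval := ⟨(i:ℝ)/n, hx⟩ with hxdef
      obtain ⟨t, ht⟩ := hball x (Set.mem_univ x)
      refine ⟨t, t.2, fun t' h1 h2 => ht ?_⟩
      rw [Metric.mem_ball, Subtype.dist_eq, Real.dist_eq]
      have hsplit : ((i:ℝ)+1)/n = (i:ℝ)/n + 1/n := add_div _ _ _
      rw [hsplit] at h2
      have hpos : (0:ℝ) ≤ 1/n := by positivity
      have habs : |(t':ℝ) - (i:ℝ)/n| ≤ 1/n := by
        rw [abs_sub_le_iff]
        constructor <;> linarith
      exact lt_of_le_of_lt habs hinv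
    choose tsel htselT htsel using hpart
    have hHVi : ∀ i (hi : i < n), ∀ s ∈ U, ∀ t : unitInterval,
        (i:ℝ)/n ≤ (t:ℝ) → (t:ℝ) ≤ ((i:ℝ)+1)/n → H (s, t) ∈ V (tsel i hi) := by
      intro i hi s hs t h1 h2
      exact hsub (tsel i hi) s (Set.mem_iInter₂.mp (hUW hs) _ (htselT i hi)) t
        (htsel i hi t h1 h2)
    haveI hUP : PreconnectedSpace U := Subtype.preconnectedSpace hUconn
    -- inductive construction over time strips
    have key : ∀ i : ℕ, i ≤ n → ∃ Λ : (Fin m → unitInterval) × unitInterval → Z,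
        ContinuousOn Λ (U ×ˢ {t : unitInterval | (t:ℝ) ≤ (i:ℝ)/n}) ∧
        (∀ s ∈ U, Λ (s, 0) = H₀ s) ∧
        (∀ s ∈ U, ∀ t : unitInterval, (t:ℝ) ≤ (i:ℝ)/n →
          Quotient.mk (MulAction.orbitRel F Z) (Λ (s, t)) = H (s, t)) := by
      intro i
      induction i with
      | zero =>
        intro _
        refine ⟨fun q => H₀ q.1, (H₀.continuous.comp continuous_fst).continuousOn,
          fun s _ => rfl, ?_⟩
        intro s hs t ht
        have ht0 : t = 0 := Subtype.ext (le_antisymm (by simpa using ht) t.2.1)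
        rw [ht0]; exact hcomp s
      | succ i ih =>
        intro hin
        obtain ⟨Λi, hΛc, hΛ0, hΛp⟩ := ih (Nat.le_of_succ_le hin)
        have hi : i < n := Nat.lt_of_succ_le hin
        have hτmem : ((i:ℝ)/n) ∈ Set.Icc (0:ℝ) 1 :=
          ⟨by positivity, by rw [div_le_one hnpos]; exact_mod_cast hi.le⟩
        set τ : unitInterval := ⟨(i:ℝ)/n, hτmem⟩ with hτdef
        have hτle : ((τ:ℝ)) ≤ (i:ℝ)/n := le_refl _
        have hii1 : (i:ℝ)/n ≤ ((i:ℝ)+1)/n := by gcongr <;> linarith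
        set Vi := V (tsel i hi) with hVidef
        set seci := sec (tsel i hi) with hsecidef
        have hHVi' : ∀ s ∈ U, ∀ t : unitInterval,
            (i:ℝ)/n ≤ (t:ℝ) → (t:ℝ) ≤ ((i:ℝ)+1)/n → H (s, t) ∈ Vi :=
          fun s hs t h1 h2 => hHVi i hi s hs t h1 h2
        -- two lifts of s ↦ H (s, τ) over U
        have ha : Continuous fun s : U => Λi ((s : Fin m → unitInterval), τ) := by
          apply hΛc.comp_continuous
            (continuous_subtype_val.prodMk continuous_const)
          exact fun s => Set.mk_mem_prod s.2 hτle
        have hb : Continuous fun s : U => seci (H ((s : Fin m → unitInterval), τ)) := by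
          apply (hsecc (tsel i hi)).comp_continuous
            (H.continuous.comp (continuous_subtype_val.prodMk continuous_const))
          exact fun s => hHVi' s.1 s.2 τ le_rfl hii1
        have horb : ∀ s : U, ∃ g : F,
            Λi ((s : Fin m → unitInterval), τ) = g • seci (H ((s : Fin m → unitInterval), τ)) := by
          intro s
          have h1 : Quotient.mk (MulAction.orbitRel F Z) (Λi ((s : Fin m → unitInterval), τ))
              = H ((s : Fin m → unitInterval), τ) := hΛp s.1 s.2 τ hτle
          have h2 : Quotient.mk (MulAction.orbitRel F Z)
              (seci (H ((s : Fin m → unitInterval), τ))) = H ((s : Fin m → unitInterval), τ) :=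
            hsecp (tsel i hi) _ (hHVi' s.1 s.2 τ le_rfl hii1)
          obtain ⟨g, hg⟩ := qeq13.mp (h1.trans h2.symm)
          exact ⟨g, hg.symm⟩
        obtain ⟨g₀, hg₀⟩ := uniq_orbit13 hc hfree ha hb horb ⟨s₀, hs₀U⟩
        refine ⟨fun q => if ((q.2 : unitInterval) : ℝ) ≤ (i:ℝ)/n then Λi q
          else g₀ • seci (H q), ?_, ?_, ?_⟩
        · -- continuity
          rw [continuousOn_iff_continuous_restrict]
          apply continuous_if_le
          · exact continuous_subtype_val.comp (continuous_snd.comp continuous_subtype_val)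
          · exact continuous_const
          · apply hΛc.comp continuous_subtype_val.continuousOn
            rintro ⟨⟨s, t⟩, hst⟩ hcond
            exact Set.mk_mem_prod hst.1 hcond
          · apply Continuous.comp_continuousOn (hc g₀)
            apply (hsecc (tsel i hi)).comp
              ((H.continuous.comp continuous_subtype_val).continuousOn)
            rintro ⟨⟨s, t⟩, hst⟩ hcond
            have h2 := hst.2
            push_cast at h2
            exact hHVi' s hst.1 t hcond h2
          · rintro ⟨⟨s, t⟩, hst⟩ hcond
            have htτ : t = τ := Subtype.ext hcond
            subst htτ
            exact hg₀ ⟨s, hst.1⟩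
        · intro s hs
          have h0 : ((0 : unitInterval) : ℝ) ≤ (i:ℝ)/n := by positivity
          beta_reduce
          split_ifs with hsp
          · exact hΛ0 s hs
          · exact absurd h0 hsp
        · intro s hs t ht
          push_cast at ht
          beta_reduce
          split_ifs with h
          · exact hΛp s hs t h
          · have hmem : H (s, t) ∈ Vi := hHVi' s hs t (le_of_not_ge h) ht
            have hps : Quotient.mk (MulAction.orbitRel F Z) (seci (H (s, t))) = H (s, t) :=
              hsecp (tsel i hi) _ hmem
            have hstep : Quotient.mk (MulAction.orbitRel F Z) (g₀ • seci (H (s, t)))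
                = Quotient.mk (MulAction.orbitRel F Z) (seci (H (s, t))) :=
              qeq13.mpr ⟨g₀, rfl⟩
            exact hstep.trans hps
    obtain ⟨Λ, hΛc, hΛ0, hΛp⟩ := key n le_rfl
    have hone : (n:ℝ)/n = 1 := div_self (ne_of_gt hnpos)
    refine ⟨U, Metric.isOpen_ball, hs₀U, Λ, ?_, hΛ0, ?_⟩
    · apply hΛc.mono
      rintro ⟨s, t⟩ ⟨hs, -⟩
      exact Set.mk_mem_prod hs (by rw [Set.mem_setOf_eq, hone]; exact t.2.2)
    · intro s hs t
      exact hΛp s hs t (by rw [hone]; exact t.2.2)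
  -- Step C: glue the local lifts
  choose Ufn hUo hUm Λfn hΛc hΛ0 hΛp using hlocal
  have hagree : ∀ s₀ : Fin m → unitInterval, ∀ s ∈ Ufn s₀, ∀ t : unitInterval,
      Λfn s (s, t) = Λfn s₀ (s, t) := by
    intro s₀ s hs t
    have ha : Continuous fun t : unitInterval => Λfn s (s, t) := by
      apply (hΛc s).comp_continuous (Continuous.prodMk continuous_const continuous_id)
      exact fun t' => Set.mk_mem_prod (hUm s) trivial
    have hb : Continuous fun t : unitInterval => Λfn s₀ (s, t) := by
      apply (hΛc s₀).comp_continuous (Continuous.prodMk continuous_const continuous_id)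
      exact fun t' => Set.mk_mem_prod hs trivial
    have horb : ∀ t : unitInterval, ∃ g : F, Λfn s (s, t) = g • Λfn s₀ (s, t) := by
      intro t'
      have h1 := hΛp s s (hUm s) t'
      have h2 := hΛp s₀ s hs t'
      obtain ⟨g, hg⟩ := qeq13.mp (h1.trans h2.symm)
      exact ⟨g, hg.symm⟩
    obtain ⟨g₀, hg₀⟩ := uniq_orbit13 hc hfree ha hb horb 0
    have h0 : Λfn s (s, 0) = Λfn s₀ (s, 0) := by
      rw [hΛ0 s s (hUm s), hΛ0 s₀ s hs]
    have hg1 : g₀ = 1 := by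
      have h00 := hg₀ 0
      rw [h0] at h00
      exact hfree g₀ _ h00.symm
    have := hg₀ t
    rw [hg1, one_smul] at this
    exact this
  refine ⟨⟨fun q => Λfn q.1 q, ?_⟩, ?_, ?_⟩
  · rw [continuous_iff_continuousAt]
    rintro ⟨s, t⟩
    have hne : (Ufn s ×ˢ (Set.univ : Set unitInterval)) ∈ nhds ((s, t) :
        (Fin m → unitInterval) × unitInterval) :=
      ((hUo s).prod isOpen_univ).mem_nhds (Set.mk_mem_prod (hUm s) trivial)
    apply ContinuousAt.congr ((hΛc s).continuousAt hne)
    filter_upwards [hne] with q hq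
    exact (hagree s q.1 hq.1 q.2).symm
  · intro s
    exact hΛ0 s s (hUm s)
  · rintro ⟨s, t⟩
    exact hΛp s s (hUm s) t

theorem cube_lift13 (hc : ∀ g : F, Continuous fun x : Z => g • x)
    (hfree : ∀ (g : F) (x : Z), g • x = x → g = 1) :
    ∀ (k : ℕ) (G : C((Fin k → unitInterval), Quotient (MulAction.orbitRel F Z))),
      ∃ h : C((Fin k → unitInterval), Z),
        ∀ s, Quotient.mk (MulAction.orbitRel F Z) (h s) = G s := by
  intro k
  induction k with
  | zero =>
    intro G
    obtain ⟨z, hz⟩ := Quotient.mk_surjective (G fun i => i.elim0)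
    refine ⟨ContinuousMap.const _ z, fun s => ?_⟩
    rw [Subsingleton.elim s (fun i => i.elim0)]
    exact hz
  | succ k ih =>
    intro G
    have hsnoc : Continuous fun x : (Fin k → unitInterval) × unitInterval =>
        (Fin.snoc x.1 x.2 : Fin (k+1) → unitInterval) := by
      apply continuous_pi
      intro i
      refine Fin.lastCases ?_ ?_ i
      · simp only [Fin.snoc_last]
        exact continuous_snd
      · intro j
        simp only [Fin.snoc_castSucc]
        exact (continuous_apply j).comp continuous_fst
    set G' : C((Fin k → unitInterval) × unitInterval, Quotient (MulAction.orbitRel F Z)) :=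
      ⟨fun x => G (Fin.snoc x.1 x.2), G.continuous.comp hsnoc⟩ with hG'
    obtain ⟨h₀, hh₀⟩ := ih ⟨fun s => G (Fin.snoc s 0),
      G.continuous.comp (hsnoc.comp (Continuous.prodMk continuous_id continuous_const))⟩
    obtain ⟨L, hL0, hLp⟩ := quot_serre13 hc hfree k h₀ G' (fun s => hh₀ s)
    refine ⟨⟨fun q => L (Fin.init q, q (Fin.last k)), L.continuous.comp ?_⟩, ?_⟩
    · exact (continuous_pi fun j => continuous_apply (Fin.castSucc j)).prodMk
        (continuous_apply (Fin.last k))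
    · intro q
      have hval := hLp (Fin.init q, q (Fin.last k))
      show Quotient.mk (MulAction.orbitRel F Z) (L (Fin.init q, q (Fin.last k))) = G q
      rw [hval]
      show G (Fin.snoc (Fin.init q) (q (Fin.last k))) = G q
      rw [Fin.snoc_init_self]



end Aux13

/-- If a finite group `F` acts continuously and freely on Hausdorff spaces
`E` and `B`, and `f : E → B` is an `F`-equivariant Serre fibration, then the induced map
`E/F → B/F` between orbit spaces is a Serre fibration. -/
theorem stmt13 {F E B : Type} [Group F] [Finite F] [TopologicalSpace E] [TopologicalSpace B]
    [T2Space E] [T2Space B] [MulAction F E] [MulAction F B]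
    (hcE : ∀ g : F, Continuous fun x : E => g • x)
    (hcB : ∀ g : F, Continuous fun x : B => g • x)
    (hfreeE : ∀ (g : F) (x : E), g • x = x → g = 1)
    (hfreeB : ∀ (g : F) (x : B), g • x = x → g = 1)
    (f : E → B) (hf_cont : Continuous f) (heq : ∀ (g : F) (x : E), f (g • x) = g • f x)
    (hf : IsSerreFibration f) :
    ∀ fbar : Quotient (MulAction.orbitRel F E) → Quotient (MulAction.orbitRel F B),
      (∀ x : E, fbar (Quotient.mk _ x) = Quotient.mk _ (f x)) →
      IsSerreFibration fbar := by
  intro fbar hfbar m H₀ H hcomp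
  obtain ⟨h₀, hh₀⟩ := cube_lift13 hcE hfreeE m H₀
  have hG0 : ∀ s, Quotient.mk (MulAction.orbitRel F B)
      ((⟨fun s => f (h₀ s), hf_cont.comp h₀.continuous⟩ :
        C((Fin m → unitInterval), B)) s) = H (s, 0) := by
    intro s
    show Quotient.mk (MulAction.orbitRel F B) (f (h₀ s)) = H (s, 0)
    rw [← hfbar (h₀ s), hh₀ s]
    exact hcomp s
  obtain ⟨G, hG0', hGp⟩ := quot_serre13 hcB hfreeB m
    ⟨fun s => f (h₀ s), hf_cont.comp h₀.continuous⟩ H hG0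
  obtain ⟨Lt, hLt0, hLtp⟩ := hf m h₀ G (fun s => (hG0' s).symm)
  refine ⟨⟨fun q => Quotient.mk (MulAction.orbitRel F E) (Lt q),
    continuous_quotient_mk'.comp Lt.continuous⟩, ?_, ?_⟩
  · intro s
    show Quotient.mk (MulAction.orbitRel F E) (Lt (s, 0)) = H₀ s
    rw [hLt0 s, hh₀ s]
  · intro q
    show fbar (Quotient.mk (MulAction.orbitRel F E) (Lt q)) = H q
    rw [hfbar (Lt q), hLtp q]
    exact hGp q
end Aux2
end
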